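/- Every finite simplicial complex $\mathcal{K}$ admits a skeleton: there exists a sequence $T_1, \ldots, T_n$ of top-dimensional simplices of $\mathcal{K}$, with $\mathcal{K}_i$ denoting the subcomplex obtained from $\mathcal{K}$ by deleting $T_1, \ldots, T_i$, such that (1) for every $i$ the subcomplex $\mathcal{K}_i \cap \bar T_i$ is acyclic, (2) no top-dimensional simplex $T$ of the final complex $S = \mathcal{K}_n$ has the property that $(S \setminus T) \cap \bar T$ is acyclic (i.e., the removal process has been carried out as long as possible), and consequently (3) the reduced homology groups of $S$ and of $\mathcal{K}$ are isomorphic in every degree. -/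

import Mathlib

open Finsupp

/-- The `i`-th smallest vertex of the finite set `s` (junk value `0` if out of range). -/
noncomputable def nthVertex (s : Finset ℕ) (i : ℕ) : ℕ := (s.sort (· ≤ ·)).getD i 0

/-- The augmented simplicial boundary of the single simplex `s`:
`∂ s = ∑ᵢ (-1)^i (s minus its i-th vertex)`.  For a vertex `{v}` this gives the chain
supported on `∅`, so we work with the augmented chain complex and its homology is
reduced homology. -/
noncomputable def simplexBoundary (s : Finset ℕ) : Finset ℕ →₀ ℤ :=
  ∑ i ∈ Finset.range s.card, Finsupp.single (s.erase (nthVertex s i)) ((-1 : ℤ) ^ i)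

/-- The (augmented) boundary operator on simplicial chains with `ℤ` coefficients. -/
noncomputable def simpBnd : (Finset ℕ →₀ ℤ) →ₗ[ℤ] (Finset ℕ →₀ ℤ) :=
  Finsupp.lsum ℤ fun s => LinearMap.toSpanSingleton ℤ _ (simplexBoundary s)

/-- The group of `n`-dimensional simplicial chains of `K`
(an `n`-simplex has `n + 1` vertices). -/
noncomputable def simpChains (K : Finset (Finset ℕ)) (n : ℕ) : Submodule ℤ (Finset ℕ →₀ ℤ) :=
  Submodule.span ℤ {x | ∃ s ∈ K, s.card = n + 1 ∧ x = Finsupp.single s 1}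

/-- The group of reduced `n`-cycles of `K`. -/
noncomputable def simpCycles (K : Finset (Finset ℕ)) (n : ℕ) : Submodule ℤ (Finset ℕ →₀ ℤ) :=
  simpChains K n ⊓ LinearMap.ker simpBnd

/-- The group of `n`-boundaries of `K`. -/
noncomputable def simpBoundaries (K : Finset (Finset ℕ)) (n : ℕ) : Submodule ℤ (Finset ℕ →₀ ℤ) :=
  (simpChains K (n + 1)).map simpBnd

/-- Reduced simplicial homology with integer coefficients of `K` in degree `n`. -/
abbrev reducedHomology (K : Finset (Finset ℕ)) (n : ℕ) :=
  ↥(simpCycles K n) ⧸ (simpBoundaries K n).comap (simpCycles K n).subtype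

/-- `K` is a (finite, abstract) simplicial complex: its members are nonempty finite sets
and it is closed under taking nonempty subsets (faces). -/
def IsComplex (K : Finset (Finset ℕ)) : Prop :=
  ∀ s ∈ K, s.Nonempty ∧ ∀ t, t ⊆ s → t.Nonempty → t ∈ K

/-- `K` is acyclic: it is nonempty and all of its reduced homology groups vanish. -/
def IsAcyclic (K : Finset (Finset ℕ)) : Prop :=
  K.Nonempty ∧ ∀ n, Subsingleton (reducedHomology K n)

/-- The closure of a simplex `V`: the simplicial complex consisting of `V` and
all of its (nonempty) faces. -/
def simplexClosure (V : Finset ℕ) : Finset (Finset ℕ) := V.powerset.erase ∅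

open Classical in
/-- Delete the top-dimensional cell `V` from the complex `X`: the remaining subcomplex
consists exactly of those simplices of `X` that are faces of some simplex of `X` not
contained in `V`; i.e. `V` is removed and every face of `V` that is a face of some
remaining simplex is retained. -/
noncomputable def deleteTop (X : Finset (Finset ℕ)) (V : Finset ℕ) : Finset (Finset ℕ) :=
  X.filter fun s => ∃ t ∈ X, s ⊆ t ∧ ¬ t ⊆ V

/-- Iteratively delete a list of top-dimensional cells from the complex `K`. -/
noncomputable def deleteSeq (K : Finset (Finset ℕ)) : List (Finset ℕ) → Finset (Finset ℕ)
  | [] => K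
  | V :: rest => deleteSeq (deleteTop K V) rest

/-- `T` is a top-dimensional simplex of `K`: it belongs to `K` and has maximal dimension. -/
def IsTopCell (K : Finset (Finset ℕ)) (T : Finset ℕ) : Prop :=
  T ∈ K ∧ ∀ s ∈ K, s.card ≤ T.card

/-!
Deleting a top cell `V` of `X` writes `X = A ∪ B` with `A = deleteTop X V` and `B` the
closure of `V`. The closure of a simplex is acyclic, being a cone on its least vertex, so when
`A ∩ B` is acyclic as well a Mayer–Vietoris diagram chase shows that the inclusion `A ⊆ X`
induces isomorphisms on reduced homology. Deleting such cells as long as one exists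
terminates, since every deletion removes `V`, and composing the isomorphisms identifies the
homology of the final complex with that of `K`.
-/

/-- The sign of the face `s.erase v` in the boundary of `s`. -/
def faceSign (s : Finset ℕ) (v : ℕ) : ℤ := (-1) ^ (s.filter (· < v)).card

lemma card_filter_lt_orderEmbOfFin {α : Type*} [LinearOrder α] (s : Finset α) {k : ℕ}
    (h : s.card = k) (i : Fin k) : (s.filter (· < s.orderEmbOfFin h i)).card = i := by
  have hmap : s.filter (· < s.orderEmbOfFin h i) =
      (Finset.Iio i).map (s.orderEmbOfFin h).toEmbedding := by
    ext x
    simp only [Finset.mem_filter, Finset.mem_map, Finset.mem_Iio, RelEmbedding.coe_toEmbedding]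
    constructor
    · rintro ⟨hx, hlt⟩
      obtain ⟨j, rfl⟩ : x ∈ Set.range (s.orderEmbOfFin h) := by simpa using hx
      exact ⟨j, (s.orderEmbOfFin h).lt_iff_lt.1 hlt, rfl⟩
    · rintro ⟨j, hj, rfl⟩
      exact ⟨s.orderEmbOfFin_mem h j, (s.orderEmbOfFin h).lt_iff_lt.2 hj⟩
  rw [hmap, Finset.card_map, Fin.card_Iio]

lemma nthVertex_eq_orderEmbOfFin (s : Finset ℕ) (i : Fin s.card) :
    nthVertex s i = s.orderEmbOfFin rfl i := by
  rw [nthVertex, Finset.orderEmbOfFin_apply, List.getD_eq_getElem _ _ (by simp)]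
  rfl

lemma simplexBoundary_eq_sum (s : Finset ℕ) :
    simplexBoundary s = ∑ v ∈ s, single (s.erase v) (faceSign s v) := by
  have hreindex := Finset.sum_map Finset.univ (s.orderEmbOfFin rfl).toEmbedding
    fun v => single (s.erase v) (faceSign s v)
  rw [s.map_orderEmbOfFin_univ rfl] at hreindex
  rw [hreindex, simplexBoundary, ← Fin.sum_univ_eq_sum_range]
  refine Finset.sum_congr rfl fun i _ => ?_
  rw [faceSign, RelEmbedding.coe_toEmbedding, card_filter_lt_orderEmbOfFin,
    nthVertex_eq_orderEmbOfFin]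

lemma faceSign_erase_of_lt {s : Finset ℕ} {v w : ℕ} (hv : v ∈ s) (hvw : v < w) :
    faceSign (s.erase v) w = -faceSign s w := by
  have hv' : v ∈ s.filter (· < w) := Finset.mem_filter.2 ⟨hv, hvw⟩
  rw [faceSign, faceSign, Finset.filter_erase, ← Finset.card_erase_add_one hv', pow_succ]
  ring

lemma faceSign_erase_of_le {s : Finset ℕ} {v w : ℕ} (hwv : w ≤ v) :
    faceSign (s.erase v) w = faceSign s w := by
  rw [faceSign, faceSign, Finset.filter_erase, Finset.erase_eq_of_notMem (by simp [hwv])]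

lemma faceSign_insert_of_lt {s : Finset ℕ} {v w : ℕ} (hv : v ∉ s) (hvw : v < w) :
    faceSign (insert v s) w = -faceSign s w := by
  rw [← neg_neg (faceSign (insert v s) w), ← faceSign_erase_of_lt (s.mem_insert_self v) hvw,
    Finset.erase_insert hv]

lemma faceSign_of_forall_le {s : Finset ℕ} {v : ℕ} (h : ∀ x ∈ s, v ≤ x) :
    faceSign s v = 1 := by
  rw [faceSign, Finset.filter_false_of_mem fun x hx => not_lt.2 (h x hx), Finset.card_empty,
    pow_zero]

lemma faceSign_mul_faceSign_erase {s : Finset ℕ} {v w : ℕ} (hv : v ∈ s) (hw : w ∈ s)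
    (hvw : v ≠ w) :
    faceSign s v * faceSign (s.erase v) w = -(faceSign s w * faceSign (s.erase w) v) := by
  rcases hvw.lt_or_gt with h | h
  · rw [faceSign_erase_of_lt hv h, faceSign_erase_of_le h.le]; ring
  · rw [faceSign_erase_of_lt hw h, faceSign_erase_of_le h.le]; ring

lemma simpBnd_single (s : Finset ℕ) (k : ℤ) :
    simpBnd (single s k) = k • simplexBoundary s := by
  rw [simpBnd, lsum_single, LinearMap.toSpanSingleton_apply]

lemma simplexBoundary_singleton (u : ℕ) : simplexBoundary {u} = single ∅ 1 := by
  rw [simplexBoundary_eq_sum, Finset.sum_singleton, Finset.erase_singleton,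
    faceSign_of_forall_le (by simp)]

lemma simpBnd_simplexBoundary (s : Finset ℕ) : simpBnd (simplexBoundary s) = 0 := by
  have hsum : simpBnd (simplexBoundary s) = ∑ p ∈ s.sigma fun v => s.erase v,
      single ((s.erase p.1).erase p.2) (faceSign s p.1 * faceSign (s.erase p.1) p.2) := by
    rw [Finset.sum_sigma, simplexBoundary_eq_sum, map_sum]
    refine Finset.sum_congr rfl fun v _ => ?_
    rw [simpBnd_single, simplexBoundary_eq_sum, Finset.smul_sum]
    simp only [smul_single, smul_eq_mul]
  rw [hsum]
  -- the face `s \ {v, w}` appears twice, via `v` first and via `w` first, with opposite signs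
  refine Finset.sum_involution (fun p _ => ⟨p.2, p.1⟩) (fun ⟨v, w⟩ hp => ?_)
    (fun ⟨v, w⟩ hp _ => ?_) (fun ⟨v, w⟩ hp => ?_) (fun _ _ => rfl)
  · obtain ⟨hv, hw⟩ := Finset.mem_sigma.1 hp
    obtain ⟨hwv, hw⟩ := Finset.mem_erase.1 hw
    dsimp only
    rw [faceSign_mul_faceSign_erase hv hw hwv.symm, Finset.erase_right_comm, single_neg,
      neg_add_cancel]
  · obtain ⟨-, hw⟩ := Finset.mem_sigma.1 hp
    exact fun h => Finset.ne_of_mem_erase hw (congrArg Sigma.fst h)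
  · obtain ⟨hv, hw⟩ := Finset.mem_sigma.1 hp
    obtain ⟨hwv, hw⟩ := Finset.mem_erase.1 hw
    exact Finset.mem_sigma.2 ⟨hw, Finset.mem_erase.2 ⟨hwv.symm, hv⟩⟩

lemma simpBnd_simpBnd (x : Finset ℕ →₀ ℤ) : simpBnd (simpBnd x) = 0 := by
  have hcomp : simpBnd ∘ₗ simpBnd = 0 := lhom_ext fun s k => by
    rw [LinearMap.comp_apply, simpBnd_single, map_smul, simpBnd_simplexBoundary, smul_zero,
      LinearMap.zero_apply]
  exact LinearMap.congr_fun hcomp x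

lemma mem_simpChains {K : Finset (Finset ℕ)} {n : ℕ} {x : Finset ℕ →₀ ℤ} :
    x ∈ simpChains K n ↔ ∀ s ∈ x.support, s ∈ K ∧ s.card = n + 1 := by
  have hsupported : simpChains K n = supported ℤ ℤ {s | s ∈ K ∧ s.card = n + 1} := by
    rw [supported_eq_span_single, simpChains]
    congr 1
    ext x
    simp only [Set.mem_image]
    grind
  rw [hsupported, mem_supported]
  rfl

lemma single_mem_simpChains {K : Finset (Finset ℕ)} {n : ℕ} {s : Finset ℕ} (k : ℤ)
    (hs : s ∈ K) (hcard : s.card = n + 1) : single s k ∈ simpChains K n := by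
  rw [← mul_one k, ← smul_eq_mul, ← smul_single]
  exact Submodule.smul_mem _ k (Submodule.subset_span ⟨s, hs, hcard, rfl⟩)

lemma simpChains_mono {A B : Finset (Finset ℕ)} (h : A ⊆ B) (n : ℕ) :
    simpChains A n ≤ simpChains B n :=
  Submodule.span_mono fun _ ⟨s, hs, hcard, hx⟩ => ⟨s, h hs, hcard, hx⟩

lemma simpChains_inter (A B : Finset (Finset ℕ)) (n : ℕ) :
    simpChains (A ∩ B) n = simpChains A n ⊓ simpChains B n := by
  ext x
  simp only [Submodule.mem_inf, mem_simpChains, Finset.mem_inter]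
  grind

lemma simpCycles_mono {A B : Finset (Finset ℕ)} (h : A ⊆ B) (n : ℕ) :
    simpCycles A n ≤ simpCycles B n :=
  inf_le_inf_right _ (simpChains_mono h n)

lemma simpBoundaries_mono {A B : Finset (Finset ℕ)} (h : A ⊆ B) (n : ℕ) :
    simpBoundaries A n ≤ simpBoundaries B n :=
  Submodule.map_mono (simpChains_mono h _)

lemma simpBoundaries_le_simpChains {K : Finset (Finset ℕ)} (hK : IsComplex K) (n : ℕ) :
    simpBoundaries K n ≤ simpChains K n := by
  rw [simpBoundaries, Submodule.map_le_iff_le_comap, simpChains, Submodule.span_le]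
  rintro _ ⟨s, hs, hcard, rfl⟩
  rw [SetLike.mem_coe, Submodule.mem_comap, simpBnd_single, one_smul, simplexBoundary_eq_sum]
  refine Submodule.sum_mem _ fun v hv => single_mem_simpChains _ ?_ ?_
  · exact (hK s hs).2 _ (s.erase_subset v)
      (Finset.card_pos.1 (by grind [Finset.card_erase_of_mem]))
  · rw [Finset.card_erase_of_mem hv, hcard, Nat.add_sub_cancel]

lemma subsingleton_reducedHomology_iff (K : Finset (Finset ℕ)) (n : ℕ) :
    Subsingleton (reducedHomology K n) ↔ simpCycles K n ≤ simpBoundaries K n := by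
  rw [Submodule.Quotient.subsingleton_iff, Submodule.comap_subtype_eq_top]

lemma isComplex_inter {A B : Finset (Finset ℕ)} (hA : IsComplex A) (hB : IsComplex B) :
    IsComplex (A ∩ B) := by
  intro s hs
  obtain ⟨hsA, hsB⟩ := Finset.mem_inter.1 hs
  exact ⟨(hA s hsA).1, fun t hts ht =>
    Finset.mem_inter.2 ⟨(hA s hsA).2 t hts ht, (hB s hsB).2 t hts ht⟩⟩

lemma mem_deleteTop {X : Finset (Finset ℕ)} {V s : Finset ℕ} :
    s ∈ deleteTop X V ↔ s ∈ X ∧ ∃ t ∈ X, s ⊆ t ∧ ¬ t ⊆ V := by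
  classical
  simp [deleteTop]

lemma deleteTop_subset (X : Finset (Finset ℕ)) (V : Finset ℕ) : deleteTop X V ⊆ X :=
  Finset.filter_subset _ _

lemma isComplex_deleteTop {X : Finset (Finset ℕ)} (hX : IsComplex X) (V : Finset ℕ) :
    IsComplex (deleteTop X V) := by
  intro s hs
  obtain ⟨hsX, t, htX, hst, htV⟩ := mem_deleteTop.1 hs
  exact ⟨(hX s hsX).1, fun u hus hu =>
    mem_deleteTop.2 ⟨(hX s hsX).2 u hus hu, t, htX, hus.trans hst, htV⟩⟩

lemma mem_simplexClosure {V s : Finset ℕ} :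
    s ∈ simplexClosure V ↔ s ⊆ V ∧ s.Nonempty := by
  rw [simplexClosure, Finset.mem_erase, Finset.mem_powerset, Finset.nonempty_iff_ne_empty]
  tauto

lemma isComplex_simplexClosure (V : Finset ℕ) : IsComplex (simplexClosure V) := fun _ hs =>
  ⟨(mem_simplexClosure.1 hs).2, fun _ hts ht =>
    mem_simplexClosure.2 ⟨hts.trans (mem_simplexClosure.1 hs).1, ht⟩⟩

lemma deleteTop_union_simplexClosure {X : Finset (Finset ℕ)} {V : Finset ℕ} (hX : IsComplex X)
    (hV : V ∈ X) : deleteTop X V ∪ simplexClosure V = X := by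
  refine subset_antisymm (Finset.union_subset (deleteTop_subset X V) fun s hs => ?_)
    fun s hs => ?_
  · exact (hX V hV).2 s (mem_simplexClosure.1 hs).1 (mem_simplexClosure.1 hs).2
  · by_cases hsV : s ⊆ V
    · exact Finset.mem_union_right _ (mem_simplexClosure.2 ⟨hsV, (hX s hs).1⟩)
    · exact Finset.mem_union_left _ (mem_deleteTop.2 ⟨hs, s, hs, subset_rfl, hsV⟩)

noncomputable def coneMap (v : ℕ) : (Finset ℕ →₀ ℤ) →ₗ[ℤ] (Finset ℕ →₀ ℤ) :=
  lsum ℤ fun s => LinearMap.toSpanSingleton ℤ _ (if v ∈ s then 0 else single (insert v s) 1)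

lemma coneMap_single (v : ℕ) (s : Finset ℕ) (k : ℤ) :
    coneMap v (single s k) = if v ∈ s then 0 else single (insert v s) k := by
  rw [coneMap, lsum_single, LinearMap.toSpanSingleton_apply]
  split_ifs
  · exact smul_zero k
  · rw [smul_single, smul_eq_mul, mul_one]

lemma coneMap_homotopy_single {v : ℕ} {s : Finset ℕ} (hvs : ∀ x ∈ s, v ≤ x) :
    simpBnd (coneMap v (single s 1)) + coneMap v (simpBnd (single s 1)) = single s 1 := by
  rw [simpBnd_single, one_smul, coneMap_single, simplexBoundary_eq_sum, map_sum]
  by_cases hv : v ∈ s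
  · -- only the face opposite to `v` survives the cone, and coning it back gives `s`
    have hterm : ∀ x ∈ s, coneMap v (single (s.erase x) (faceSign s x)) =
        if x = v then single s 1 else 0 := by
      intro x hx
      rw [coneMap_single]
      rcases eq_or_ne x v with rfl | hxv
      · rw [if_neg (Finset.notMem_erase _ _), if_pos rfl, Finset.insert_erase hv,
          faceSign_of_forall_le hvs]
      · rw [if_pos (Finset.mem_erase.2 ⟨hxv.symm, hv⟩), if_neg hxv]
    rw [if_pos hv, map_zero, zero_add, Finset.sum_congr rfl hterm, Finset.sum_ite_eq' s v,
      if_pos hv]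
  · have hvlt : ∀ x ∈ s, v < x := fun x hx => (hvs x hx).lt_of_ne fun h => hv (h ▸ hx)
    have hterm : ∀ x ∈ s, coneMap v (single (s.erase x) (faceSign s x)) =
        single ((insert v s).erase x) (-faceSign (insert v s) x) := by
      intro x hx
      rw [coneMap_single, if_neg fun h => hv (Finset.mem_of_mem_erase h),
        Finset.erase_insert_of_ne (hvlt x hx).ne, faceSign_insert_of_lt hv (hvlt x hx), neg_neg]
    rw [if_neg hv, simpBnd_single, one_smul, simplexBoundary_eq_sum, Finset.sum_insert hv,
      Finset.erase_insert hv, faceSign_of_forall_le fun x hx => ?_, Finset.sum_congr rfl hterm]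
    · simp only [single_neg, Finset.sum_neg_distrib]
      abel
    · rcases Finset.mem_insert.1 hx with rfl | hx
      exacts [le_rfl, hvs x hx]

lemma isAcyclic_simplexClosure {V : Finset ℕ} (hV : V.Nonempty) :
    IsAcyclic (simplexClosure V) := by
  refine ⟨⟨V, mem_simplexClosure.2 ⟨subset_rfl, hV⟩⟩, fun n => ?_⟩
  rw [subsingleton_reducedHomology_iff]
  set v := V.min' hV
  have hhomotopy : ∀ z ∈ simpChains (simplexClosure V) n,
      simpBnd (coneMap v z) + coneMap v (simpBnd z) = z := by
    refine fun z hz => LinearMap.eqOn_span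
      (f := simpBnd ∘ₗ coneMap v + coneMap v ∘ₗ simpBnd) (g := LinearMap.id) ?_ hz
    rintro _ ⟨s, hs, -, rfl⟩
    exact coneMap_homotopy_single fun x hx => V.min'_le x ((mem_simplexClosure.1 hs).1 hx)
  have hcone : simpChains (simplexClosure V) n ≤
      (simpChains (simplexClosure V) (n + 1)).comap (coneMap v) := by
    rw [simpChains, Submodule.span_le]
    rintro _ ⟨s, hs, hcard, rfl⟩
    rw [SetLike.mem_coe, Submodule.mem_comap, coneMap_single]
    split_ifs with hvs
    · exact Submodule.zero_mem _
    · refine single_mem_simpChains _ (mem_simplexClosure.2 ⟨?_, Finset.insert_nonempty _ _⟩) ?_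
      · exact Finset.insert_subset (V.min'_mem hV) (mem_simplexClosure.1 hs).1
      · rw [Finset.card_insert_of_notMem hvs, hcard]
  rintro z ⟨hz, hzcycle⟩
  refine ⟨coneMap v z, hcone hz, ?_⟩
  rw [← add_zero (simpBnd _), ← map_zero (coneMap v), ← LinearMap.mem_ker.1 hzcycle]
  exact hhomotopy z hz

lemma exists_simpChains_add_of_subset_union {X A B : Finset (Finset ℕ)} (hX : X ⊆ A ∪ B)
    {m : ℕ} {z : Finset ℕ →₀ ℤ} (hz : z ∈ simpChains X m) :
    ∃ a ∈ simpChains A m, ∃ b ∈ simpChains B m, a + b = z := by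
  classical
  refine ⟨z.filter (· ∈ A), ?_, z.filter (· ∉ A), ?_, filter_add_filter_not _ _⟩
  all_goals
    rw [mem_simpChains]
    intro s hs
    rw [support_filter, Finset.mem_filter] at hs
    obtain ⟨hsX, hcard⟩ := mem_simpChains.1 hz s hs.1
  · exact ⟨hs.2, hcard⟩
  · exact ⟨(Finset.mem_union.1 (hX hsX)).resolve_left hs.2, hcard⟩

lemma exists_simpChains_inter_simpBnd_eq {A B : Finset (Finset ℕ)} (hB : IsComplex B) {m : ℕ}
    (hI : simpCycles (A ∩ B) m ≤ simpBoundaries (A ∩ B) m) {b : Finset ℕ →₀ ℤ}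
    (hb : b ∈ simpChains B (m + 1)) (hbA : simpBnd b ∈ simpChains A m) :
    ∃ c ∈ simpChains (A ∩ B) (m + 1), simpBnd c = simpBnd b := by
  have hbB : simpBnd b ∈ simpChains B m :=
    simpBoundaries_le_simpChains hB m (Submodule.mem_map_of_mem hb)
  refine Submodule.mem_map.1 (hI ⟨?_, LinearMap.mem_ker.2 (simpBnd_simpBnd b)⟩)
  rw [simpChains_inter]
  exact ⟨hbA, hbB⟩

/-- In degree `0` the boundary only records the augmentation, which any vertex can realize. -/
lemma exists_simpChains_zero_simpBnd_eq {K L : Finset (Finset ℕ)} (hL : IsComplex L)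
    (hne : L.Nonempty) {x : Finset ℕ →₀ ℤ} (hx : x ∈ simpChains K 0) :
    ∃ c ∈ simpChains L 0, simpBnd c = simpBnd x := by
  obtain ⟨s, hs⟩ := hne
  obtain ⟨⟨u, hu⟩, hfaces⟩ := hL s hs
  have haug : simpChains K 0 ≤ (Submodule.span ℤ {single ∅ 1}).comap simpBnd := by
    rw [simpChains, Submodule.span_le]
    rintro _ ⟨t, -, hcard, rfl⟩
    obtain ⟨w, rfl⟩ := Finset.card_eq_one.1 hcard
    rw [SetLike.mem_coe, Submodule.mem_comap, simpBnd_single, one_smul, simplexBoundary_singleton]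
    exact Submodule.mem_span_singleton_self _
  obtain ⟨k, hk⟩ := Submodule.mem_span_singleton.1 (haug hx)
  refine ⟨single {u} k, single_mem_simpChains k ?_ rfl, ?_⟩
  · exact hfaces {u} (Finset.singleton_subset_iff.2 hu) (Finset.singleton_nonempty u)
  · rw [simpBnd_single, simplexBoundary_singleton, hk]

noncomputable def homologyInclusion {A X : Finset (Finset ℕ)} (h : A ⊆ X) (n : ℕ) :
    reducedHomology A n →ₗ[ℤ] reducedHomology X n :=
  Submodule.mapQ _ _ (Submodule.inclusion (simpCycles_mono h n)) fun _ hz =>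
    simpBoundaries_mono h n hz

lemma homologyInclusion_injective {A B X : Finset (Finset ℕ)} (hA : IsComplex A)
    (hB : IsComplex B) (hAX : A ⊆ X) (hX : X ⊆ A ∪ B) {n : ℕ}
    (hI : simpCycles (A ∩ B) n ≤ simpBoundaries (A ∩ B) n) :
    Function.Injective (homologyInclusion hAX n) := by
  rw [← LinearMap.ker_eq_bot, Submodule.eq_bot_iff]
  intro q hq
  obtain ⟨z, rfl⟩ := Submodule.Quotient.mk_surjective _ q
  rw [LinearMap.mem_ker, homologyInclusion, Submodule.mapQ_apply,
    Submodule.Quotient.mk_eq_zero, Submodule.mem_comap] at hq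
  rw [Submodule.Quotient.mk_eq_zero, Submodule.mem_comap]
  obtain ⟨w, hw, hwz⟩ := Submodule.mem_map.1 hq
  obtain ⟨a, ha, b, hb, rfl⟩ := exists_simpChains_add_of_subset_union hX hw
  have hbA : simpBnd b ∈ simpChains A n := by
    rw [map_add] at hwz
    rw [eq_sub_of_add_eq' hwz]
    exact Submodule.sub_mem _ z.2.1 (simpBoundaries_le_simpChains hA n ⟨a, ha, rfl⟩)
  obtain ⟨c, hc, hcb⟩ := exists_simpChains_inter_simpBnd_eq hB hI hb hbA
  refine ⟨a + c, Submodule.add_mem _ ha (simpChains_mono Finset.inter_subset_left _ hc), ?_⟩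
  rw [map_add, hcb, ← map_add, hwz]
  rfl

lemma homologyInclusion_surjective {A B X : Finset (Finset ℕ)} (hA : IsComplex A)
    (hB : IsComplex B) (hAX : A ⊆ X) (hBX : B ⊆ X) (hX : X ⊆ A ∪ B) (hBac : IsAcyclic B)
    (hIac : IsAcyclic (A ∩ B)) (n : ℕ) :
    Function.Surjective (homologyInclusion hAX n) := by
  intro q
  obtain ⟨⟨z, hzX⟩, rfl⟩ := Submodule.Quotient.mk_surjective _ q
  obtain ⟨hz, hzcycle⟩ := Submodule.mem_inf.1 hzX
  rw [LinearMap.mem_ker] at hzcycle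
  obtain ⟨a, ha, b, hb, rfl⟩ := exists_simpChains_add_of_subset_union hX hz
  have hab : simpBnd b = -simpBnd a := eq_neg_of_add_eq_zero_right (by rwa [← map_add])
  -- correct `b` by a chain `c` of `A ∩ B` with the same boundary; then `b - c` is a cycle of `B`
  obtain ⟨c, hc, hcb⟩ : ∃ c ∈ simpChains (A ∩ B) n, simpBnd c = simpBnd b := by
    cases n with
    | zero => exact exists_simpChains_zero_simpBnd_eq (isComplex_inter hA hB) hIac.1 hb
    | succ m =>
      refine exists_simpChains_inter_simpBnd_eq hB
        ((subsingleton_reducedHomology_iff _ m).1 (hIac.2 m)) hb ?_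
      rw [hab]
      exact Submodule.neg_mem _ (simpBoundaries_le_simpChains hA m ⟨a, ha, rfl⟩)
  have hbc : b - c ∈ simpCycles B n := Submodule.mem_inf.2
    ⟨Submodule.sub_mem _ hb (simpChains_mono Finset.inter_subset_right _ hc),
      by rw [LinearMap.mem_ker, map_sub, hcb, sub_self]⟩
  obtain ⟨d, hd, hdbc⟩ := (subsingleton_reducedHomology_iff B n).1 (hBac.2 n) hbc
  have hac : a + c ∈ simpCycles A n := Submodule.mem_inf.2
    ⟨Submodule.add_mem _ ha (simpChains_mono Finset.inter_subset_left _ hc),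
      by rw [LinearMap.mem_ker, map_add, hcb, ← map_add, hzcycle]⟩
  refine ⟨Submodule.Quotient.mk ⟨a + c, hac⟩, ?_⟩
  rw [homologyInclusion, Submodule.mapQ_apply, Submodule.Quotient.eq, Submodule.mem_comap]
  refine ⟨-d, Submodule.neg_mem _ (simpChains_mono hBX _ hd), ?_⟩
  rw [map_neg, hdbc]
  change -(b - c) = (a + c) - (a + b)
  abel

lemma nonempty_reducedHomology_deleteTop_equiv {X : Finset (Finset ℕ)} {V : Finset ℕ}
    (hX : IsComplex X) (hV : V ∈ X) (hac : IsAcyclic (deleteTop X V ∩ simplexClosure V))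
    (n : ℕ) : Nonempty (reducedHomology (deleteTop X V) n ≃ₗ[ℤ] reducedHomology X n) := by
  have hunion := deleteTop_union_simplexClosure hX hV
  have hA := isComplex_deleteTop hX V
  have hB := isComplex_simplexClosure V
  exact ⟨LinearEquiv.ofBijective (homologyInclusion (deleteTop_subset X V) n)
    ⟨homologyInclusion_injective hA hB _ hunion.ge ((subsingleton_reducedHomology_iff _ n).1
        (hac.2 n)),
      homologyInclusion_surjective hA hB _ (hunion ▸ Finset.subset_union_right) hunion.ge
        (isAcyclic_simplexClosure (hX V hV).1) hac n⟩⟩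

lemma card_deleteTop_lt {X : Finset (Finset ℕ)} {V : Finset ℕ} (hV : IsTopCell X V) :
    (deleteTop X V).card < X.card := by
  refine Finset.card_lt_card ((Finset.ssubset_iff_of_subset (deleteTop_subset X V)).2
    ⟨V, hV.1, fun hdel => ?_⟩)
  obtain ⟨-, t, htX, hVt, htV⟩ := mem_deleteTop.1 hdel
  exact htV (Finset.eq_of_subset_of_card_le hVt (hV.2 t htX) ▸ subset_rfl)

/-- Every finite simplicial complex `K` admits a skeleton: there is a
sequence `T = [T₁, …, Tₙ]` of top-dimensional simplices (each top-dimensional in the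
complex from which it is deleted), with `Kᵢ = deleteSeq K (T.take i)` the subcomplex
obtained from `K` by deleting `T₁, …, Tᵢ`, such that
(1) for every `i` the subcomplex `Kᵢ ∩ closure Tᵢ` is acyclic,
(2) no top-dimensional simplex `V` of the final complex `S = Kₙ` has the property that
    `(S \ V) ∩ closure V` is acyclic (the removal process has been run as long as
    possible), and consequently
(3) the reduced homology groups of `S` and of `K` are isomorphic in every degree. -/
theorem skeleton_exists (K : Finset (Finset ℕ)) (hK : IsComplex K) :
    ∃ T : List (Finset ℕ),
      (∀ i : Fin T.length, IsTopCell (deleteSeq K (T.take ↑i)) (T.get i)) ∧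
      (∀ i : Fin T.length,
        IsAcyclic (deleteSeq K (T.take (↑i + 1)) ∩ simplexClosure (T.get i))) ∧
      (∀ V : Finset ℕ, IsTopCell (deleteSeq K T) V →
        ¬ IsAcyclic (deleteTop (deleteSeq K T) V ∩ simplexClosure V)) ∧
      (∀ m : ℕ,
        Nonempty (reducedHomology (deleteSeq K T) m ≃ₗ[ℤ] reducedHomology K m)) := by
  by_cases hstuck : ∀ V, IsTopCell K V → ¬ IsAcyclic (deleteTop K V ∩ simplexClosure V)
  · exact ⟨[], nofun, nofun, hstuck, fun m => ⟨LinearEquiv.refl ℤ _⟩⟩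
  push Not at hstuck
  obtain ⟨V, hVtop, hVac⟩ := hstuck
  obtain ⟨T, htop, hac, hmax, hiso⟩ :=
    skeleton_exists (deleteTop K V) (isComplex_deleteTop hK V)
  refine ⟨V :: T, fun i => Fin.cases hVtop htop i, fun i => Fin.cases hVac hac i, hmax,
    fun m => ?_⟩
  exact ⟨(hiso m).some.trans (nonempty_reducedHomology_deleteTop_equiv hK hVtop.1 hVac m).some⟩
termination_by K.card
decreasing_by exact card_deleteTop_lt hVtop
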